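/- A monad T on a dagger category C is a Frobenius monad if and only if the Kleisli category C_T admits a dagger such that (i) the canonical functors C → C_T and C_T → C are dagger functors, and (ii) for every object A, the morphism μ_A† : T(A) → T²(A) of C, regarded as a morphism T(A) → T(A) of C_T, is self-adjoint with respect to that dagger. -/

import Mathlib

/-!
The forgetful functor `C_T ⥤ C` is faithful, so there is at most one dagger on `C_T` making it a
dagger functor, and one exists as soon as the adjoint of every free extension `T g ≫ μ` is again a
free extension. For a Frobenius monad it is: `μ† ≫ T g†` is the free extension of
`η ≫ μ† ≫ T g†`, by the Frobenius law and `T η ≫ μ_T† ≫ T μ = μ†`. As the canonical functor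
`C ⥤ C_T` followed by the forgetful one is `T`, the former is a dagger functor iff `T` is; and then
the forgetful functor turns self-adjointness of `μ_A†` in `C_T` into exactly the Frobenius law
at `A`.
-/

open CategoryTheory Category MonoidalCategory

universe v u

/-- A dagger structure on a category: a contravariant, identity-on-objects,
involutive operation on morphisms. -/
class DaggerStruct (C : Type u) [Category.{v} C] where
  dag : ∀ {X Y : C}, (X ⟶ Y) → (Y ⟶ X)
  dag_dag : ∀ {X Y : C} (f : X ⟶ Y), dag (dag f) = f
  dag_id : ∀ X : C, dag (𝟙 X) = 𝟙 X
  dag_comp : ∀ {X Y Z : C} (f : X ⟶ Y) (g : Y ⟶ Z), dag (f ≫ g) = dag g ≫ dag f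

notation:max f "†" => DaggerStruct.dag f

/-- A monoidal dagger category: the dagger cooperates with the monoidal structure. -/
class MonoidalDagger (C : Type u) [Category.{v} C] [MonoidalCategory C] extends
    DaggerStruct C where
  dag_tensor : ∀ {X₁ Y₁ X₂ Y₂ : C} (f : X₁ ⟶ Y₁) (g : X₂ ⟶ Y₂), (f ⊗ₘ g)† = f† ⊗ₘ g†
  assoc_unitary : ∀ X Y Z : C, ((α_ X Y Z).hom)† = (α_ X Y Z).inv
  lunitor_unitary : ∀ X : C, ((λ_ X).hom)† = (λ_ X).inv
  runitor_unitary : ∀ X : C, ((ρ_ X).hom)† = (ρ_ X).inv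

/-- A symmetric monoidal dagger category: additionally the symmetries are unitary. -/
class SymmetricDagger (C : Type u) [Category.{v} C] [MonoidalCategory C]
    [SymmetricCategory C] extends MonoidalDagger C where
  braiding_unitary : ∀ X Y : C, ((β_ X Y).hom)† = (β_ X Y).inv

/-- A monoid object, given by explicit data. -/
structure IsMonoidObj {C : Type u} [Category.{v} C] [MonoidalCategory C] (A : C)
    (m : A ⊗ A ⟶ A) (u : 𝟙_ C ⟶ A) : Prop where
  mul_assoc : (m ⊗ₘ 𝟙 A) ≫ m = (α_ A A A).hom ≫ (𝟙 A ⊗ₘ m) ≫ m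
  one_mul : (u ⊗ₘ 𝟙 A) ≫ m = (λ_ A).hom
  mul_one : (𝟙 A ⊗ₘ u) ≫ m = (ρ_ A).hom

/-- A Frobenius monoid in a monoidal dagger category. -/
structure IsFrobeniusMonoid {C : Type u} [Category.{v} C] [MonoidalCategory C]
    [MonoidalDagger C] (A : C) (m : A ⊗ A ⟶ A) (u : 𝟙_ C ⟶ A) : Prop extends
    IsMonoidObj A m u where
  frobenius : (m† ⊗ₘ 𝟙 A) ≫ (α_ A A A).hom ≫ (𝟙 A ⊗ₘ m) =
    (𝟙 A ⊗ₘ m†) ≫ (α_ A A A).inv ≫ (m ⊗ₘ 𝟙 A)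

/-- A Frobenius monad on a dagger category. -/
structure IsFrobeniusMonad {C : Type u} [Category.{v} C] [DaggerStruct C]
    (T : Monad C) : Prop where
  map_dag : ∀ {X Y : C} (f : X ⟶ Y), T.map (f†) = (T.map f)†
  frobenius : ∀ A : C,
    ((T.μ.app (T.obj A))†) ≫ T.map (T.μ.app A) =
      T.map ((T.μ.app A)†) ≫ T.μ.app (T.obj A)

/-- An object of `C` regarded as an object of the Kleisli category. -/
def kObj {C : Type u} [Category.{v} C] (T : Monad C) (X : C) : Kleisli T := Kleisli.mk T X

/-- A morphism `X ⟶ T (Y)` of `C` regarded as a morphism of the Kleisli category. -/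
def kHom {C : Type u} [Category.{v} C] (T : Monad C) {X Y : C} (f : X ⟶ T.obj Y) :
    kObj T X ⟶ kObj T Y := Kleisli.Hom.mk f

universe v₁ u₁

section Dagger

variable {D : Type u₁} [Category.{v₁} D] {C : Type u} [Category.{v} C] [DaggerStruct C]

def IsDaggerFunctor [DaggerStruct D] (F : D ⥤ C) : Prop :=
  ∀ ⦃X Y : D⦄ (f : X ⟶ Y), F.map (f†) = (F.map f)†

abbrev DaggerStruct.ofFaithful (F : D ⥤ C) [F.Faithful] (dag : ∀ {X Y : D}, (X ⟶ Y) → (Y ⟶ X))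
    (map_dag : ∀ {X Y : D} (g : X ⟶ Y), F.map (dag g) = (F.map g)†) : DaggerStruct D where
  dag := dag
  dag_dag f := F.map_injective <| by rw [map_dag, map_dag, DaggerStruct.dag_dag]
  dag_id X := F.map_injective <| by rw [map_dag, F.map_id, DaggerStruct.dag_id]
  dag_comp f g := F.map_injective <| by
    simp only [map_dag, F.map_comp, DaggerStruct.dag_comp]

theorem isDaggerFunctor_comp_iff {E : Type*} [Category E] [DaggerStruct D] [DaggerStruct E]
    {F : E ⥤ D} {G : D ⥤ C} [G.Faithful] (hG : IsDaggerFunctor G) :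
    IsDaggerFunctor (F ⋙ G) ↔ IsDaggerFunctor F := by
  refine ⟨fun h X Y f => G.map_injective ?_, fun h X Y f => ?_⟩
  · rw [hG, ← Functor.comp_map, h, Functor.comp_map]
  · rw [Functor.comp_map, h, hG, Functor.comp_map]

end Dagger

namespace CategoryTheory.Kleisli

open CategoryTheory.Kleisli.Adjunction

variable {C : Type u} [Category.{v} C] {T : Monad C}

theorem η_comp_fromKleisli_map {X Y : Kleisli T} (g : X ⟶ Y) :
    T.η.app X.of ≫ (fromKleisli T).map g = g.of :=
  calc T.η.app X.of ≫ T.map g.of ≫ T.μ.app Y.of = g.of ≫ T.η.app _ ≫ T.μ.app Y.of := by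
        rw [← T.η.naturality_assoc]; rfl
    _ = g.of := by rw [T.left_unit]; exact comp_id _

instance : (fromKleisli T).Faithful where
  map_injective {_ _} g h e := hom_ext <| by
    rw [← η_comp_fromKleisli_map g, e, η_comp_fromKleisli_map]

theorem toKleisli_comp_fromKleisli : toKleisli T ⋙ fromKleisli T = T.toFunctor :=
  CategoryTheory.Functor.ext (fun _ => rfl) fun X Y f => by
    change T.map (f ≫ T.η.app Y) ≫ T.μ.app Y = 𝟙 _ ≫ T.map f ≫ 𝟙 _
    rw [id_comp, comp_id, T.map_comp, assoc, T.right_unit]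
    exact comp_id _

theorem fromKleisli_map_kHom {X Y : C} (f : X ⟶ T.obj Y) :
    (fromKleisli T).map (kHom T f) = T.map f ≫ T.μ.app Y :=
  rfl

end CategoryTheory.Kleisli

namespace IsDaggerFunctor

variable {C : Type u} [Category.{v} C] [DaggerStruct C] {T : Monad C}

theorem μ_dag_comp_map_η_dag (hT : IsDaggerFunctor T.toFunctor) (X : C) :
    (T.μ.app X)† ≫ T.map (T.η.app X)† = 𝟙 _ := by
  rw [hT, ← DaggerStruct.dag_comp, T.right_unit, DaggerStruct.dag_id]
  rfl

theorem map_η_comp_μ_dag_comp_map_μ (hT : IsDaggerFunctor T.toFunctor) (X : C) :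
    T.map (T.η.app X) ≫ (T.μ.app (T.obj X))† ≫ T.map (T.μ.app X) = (T.μ.app X)† := by
  have h : T.map (T.μ.app X)† ≫ T.μ.app (T.obj X) ≫ T.map (T.η.app X)† = T.μ.app X := by
    rw [← T.μ.naturality, Functor.comp_map, ← Functor.map_comp_assoc,
      hT.μ_dag_comp_map_η_dag, T.map_id]
    exact id_comp _
  have h' := congrArg DaggerStruct.dag h
  rwa [DaggerStruct.dag_comp, DaggerStruct.dag_comp, ← hT, ← hT, DaggerStruct.dag_dag,
    DaggerStruct.dag_dag, assoc] at h'

end IsDaggerFunctor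

section KleisliDagger

open Kleisli.Adjunction

variable {C : Type u} [Category.{v} C] [DaggerStruct C] {T : Monad C}

theorem IsFrobeniusMonad.isDaggerFunctor (hT : IsFrobeniusMonad T) :
    IsDaggerFunctor T.toFunctor :=
  fun _ _ => hT.map_dag

def kleisliDag (T : Monad C) {X Y : Kleisli T} (g : X ⟶ Y) : Y ⟶ X :=
  ⟨T.η.app Y.of ≫ ((fromKleisli T).map g)†⟩

theorem IsFrobeniusMonad.fromKleisli_map_kleisliDag (hT : IsFrobeniusMonad T)
    {X Y : Kleisli T} (g : X ⟶ Y) :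
    (fromKleisli T).map (kleisliDag T g) = ((fromKleisli T).map g)† := by
  change T.map (T.η.app Y.of ≫ (T.map g.of ≫ T.μ.app Y.of)†) ≫ T.μ.app X.of =
    (T.map g.of ≫ T.μ.app Y.of)†
  rw [DaggerStruct.dag_comp, ← hT.map_dag]
  calc T.map (T.η.app Y.of ≫ (T.μ.app Y.of)† ≫ T.map g.of†) ≫ T.μ.app X.of
      = T.map (T.η.app Y.of) ≫ T.map (T.μ.app Y.of)† ≫ T.map (T.map g.of†) ≫ T.μ.app X.of := by
        simp only [T.map_comp, assoc]
    _ = T.map (T.η.app Y.of) ≫ T.map (T.μ.app Y.of)† ≫ T.μ.app (T.obj Y.of) ≫ T.map g.of† := by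
        rw [T.mu_naturality]
    _ = T.map (T.η.app Y.of) ≫ (T.μ.app (T.obj Y.of))† ≫ T.map (T.μ.app Y.of) ≫ T.map g.of† := by
        rw [reassoc_of% hT.frobenius]
    _ = (T.μ.app Y.of)† ≫ T.map g.of† :=
        (reassoc_of% (hT.isDaggerFunctor.map_η_comp_μ_dag_comp_map_μ Y.of)) _

variable [DaggerStruct (Kleisli T)]

theorem isDaggerFunctor_toKleisli_iff (hF : IsDaggerFunctor (fromKleisli T)) :
    IsDaggerFunctor (toKleisli T) ↔ IsDaggerFunctor T.toFunctor := by
  rw [← isDaggerFunctor_comp_iff hF, Kleisli.toKleisli_comp_fromKleisli]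

theorem kHom_μ_dag_selfAdjoint_iff (hF : IsDaggerFunctor (fromKleisli T))
    (hT : IsDaggerFunctor T.toFunctor) (A : C) :
    (kHom T (T.μ.app A)†)† = kHom T (T.μ.app A)† ↔
      (T.μ.app (T.obj A))† ≫ T.map (T.μ.app A) = T.map (T.μ.app A)† ≫ T.μ.app (T.obj A) := by
  rw [← (fromKleisli T).map_injective.eq_iff, hF, Kleisli.fromKleisli_map_kHom]
  change (T.map (T.μ.app A)† ≫ T.μ.app (T.obj A))† = _ ↔ _
  rw [DaggerStruct.dag_comp, ← hT, DaggerStruct.dag_dag]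

end KleisliDagger

/-- STATEMENT 11: a monad `T` on a dagger category `C` is a Frobenius monad iff the
Kleisli category `C_T` admits a dagger such that (i) the canonical functors `C → C_T`
and `C_T → C` are dagger functors, and (ii) each `μ_A† : T(A) ⟶ T(A)` (as a Kleisli
morphism) is self-adjoint with respect to that dagger. -/
theorem frobenius_iff_kleisli_dagger {C : Type u} [Category.{v} C] [DaggerStruct C]
    (T : Monad C) :
    IsFrobeniusMonad T ↔
      ∃ ds : DaggerStruct (Kleisli T),
        (∀ {X Y : C} (f : X ⟶ Y),
          ds.dag ((Kleisli.Adjunction.toKleisli T).map f) =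
            (Kleisli.Adjunction.toKleisli T).map (f†)) ∧
        (∀ {X Y : Kleisli T} (g : X ⟶ Y),
          (Kleisli.Adjunction.fromKleisli T).map (ds.dag g) =
            (((Kleisli.Adjunction.fromKleisli T).map g)†)) ∧
        (∀ A : C, ds.dag (kHom T ((T.μ.app A)†)) = kHom T ((T.μ.app A)†)) := by
  constructor
  · intro hT
    let := DaggerStruct.ofFaithful (Kleisli.Adjunction.fromKleisli T) (kleisliDag T)
      hT.fromKleisli_map_kleisliDag
    have hF : IsDaggerFunctor (Kleisli.Adjunction.fromKleisli T) := fun _ _ g =>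
      hT.fromKleisli_map_kleisliDag g
    have hto := (isDaggerFunctor_toKleisli_iff hF).2 hT.isDaggerFunctor
    exact ⟨inferInstance, fun f => (hto f).symm, fun g => hF g,
      fun A => (kHom_μ_dag_selfAdjoint_iff hF hT.isDaggerFunctor A).2 (hT.frobenius A)⟩
  · rintro ⟨ds, hto, hfrom, hself⟩
    have hF : IsDaggerFunctor (Kleisli.Adjunction.fromKleisli T) := fun _ _ => hfrom
    have hT := (isDaggerFunctor_toKleisli_iff hF).1 fun _ _ f => (hto f).symm
    exact ⟨fun f => hT f, fun A => (kHom_μ_dag_selfAdjoint_iff hF hT A).1 (hself A)⟩
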